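/- For the collapsed walk on the line with basis {|R,x⟩ (0≤x≤n−1), |L,x⟩ (1≤x≤n)}, the perturbed operator U' = U − 2|L,1⟩⟨R,0| satisfies ⟨ψ₀|U'|ψ₀⟩ = 1 − 1/2^{n−1}, where |ψ₀⟩ has amplitudes ⟨R,x|ψ₀⟩ = √(C(n−1,x)/2^n) and ⟨L,x|ψ₀⟩ = √(C(n−1,x−1)/2^n). -/

import Mathlib

open Matrix

/-- `cos ω_x = 1 - 2x/n`. -/
noncomputable def cosOmega (n x : ℕ) : ℝ := 1 - 2 * x / n

/-- `sin ω_x = (2/n)√(x(n-x))`. -/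
noncomputable def sinOmega (n x : ℕ) : ℝ := (2 / n) * Real.sqrt (x * ((n : ℝ) - x))

/-- The collapsed (line) walk operator, on the basis `|R,x⟩ = (false, x)`,
`|L,x⟩ = (true, x)`:
`U = Σ_x |R,x⟩(−cos ω_{x+1}⟨L,x+1| + sin ω_{x+1}⟨R,x+1|)
   + Σ_x |L,x⟩(sin ω_{x−1}⟨L,x−1| + cos ω_{x−1}⟨R,x−1|)`. -/
noncomputable def collapsedU (n : ℕ) :
    Matrix (Bool × Fin (n + 1)) (Bool × Fin (n + 1)) ℂ :=
  Matrix.of fun p q =>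
    if p.1 = false ∧ q.1 = true ∧ (q.2 : ℕ) = (p.2 : ℕ) + 1 then (-(cosOmega n q.2) : ℝ)
    else if p.1 = false ∧ q.1 = false ∧ (q.2 : ℕ) = (p.2 : ℕ) + 1 then (sinOmega n q.2 : ℝ)
    else if p.1 = true ∧ q.1 = true ∧ (q.2 : ℕ) + 1 = (p.2 : ℕ) then (sinOmega n q.2 : ℝ)
    else if p.1 = true ∧ q.1 = false ∧ (q.2 : ℕ) + 1 = (p.2 : ℕ) then (cosOmega n q.2 : ℝ)
    else 0

/-- The perturbed collapsed walk operator `U' = U − 2|L,1⟩⟨R,0|`. -/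
noncomputable def collapsedU' (n : ℕ) :
    Matrix (Bool × Fin (n + 1)) (Bool × Fin (n + 1)) ℂ :=
  collapsedU n -
    (2 : ℂ) • Matrix.of fun p q =>
      if p = (true, (1 : Fin (n + 1))) ∧ q = (false, (0 : Fin (n + 1))) then 1 else 0

/-- The collapsed uniform superposition: `⟨R,x|ψ₀⟩ = √(C(n−1,x)/2^n)` and
`⟨L,x|ψ₀⟩ = √(C(n−1,x−1)/2^n)` for `x ≥ 1`. -/
noncomputable def linePsi0 (n : ℕ) : Bool × Fin (n + 1) → ℂ :=
  fun p =>
    if p.1 = false then (Real.sqrt ((n - 1).choose p.2 / 2 ^ n) : ℝ)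
    else if (p.2 : ℕ) = 0 then 0
    else (Real.sqrt ((n - 1).choose ((p.2 : ℕ) - 1) / 2 ^ n) : ℝ)

/-!
Since `ψ₀` is real and `⟨L,k+1|ψ₀⟩ = ⟨R,k|ψ₀⟩ =: a_k`, the quadratic form `⟨ψ₀|U|ψ₀⟩` is a sum over
`0 ≤ k < n` of `(cos ω_k - cos ω_{k+1}) a_k² + sin ω_{k+1} a_k a_{k+1} + sin ω_k a_k a_{k-1}`.
Here `cos ω_k - cos ω_{k+1} = 2/n`, and the identity `(k+1) C(n-1,k+1) = (n-1-k) C(n-1,k)` makes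
the products under the square roots perfect squares, so the `k`-th term is
`(2/n)(1 + (n-1-k) + k) C(n-1,k)/2^n = C(n-1,k)/2^{n-1}` and `⟨ψ₀|U|ψ₀⟩ = 1`.
The perturbation contributes `-2 a_0² = -1/2^{n-1}`.
-/

open Finset

lemma Matrix.dotProduct_single_mulVec {ι R : Type*} [Fintype ι] [DecidableEq ι] [CommSemiring R]
    (w v : ι → R) (i j : ι) (c : R) : w ⬝ᵥ single i j c *ᵥ v = w i * c * v j := by
  rw [single_mulVec_eq, dotProduct_smul, dotProduct_single, smul_eq_mul]
  ring

section mulVec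
variable {n : ℕ} (v : Bool × Fin (n + 1) → ℂ)

lemma collapsedU_mulVec_false_castSucc (x : Fin n) :
    (collapsedU n *ᵥ v) (false, x.castSucc)
      = -(cosOmega n (x + 1) : ℂ) * v (true, x.succ) + sinOmega n (x + 1) * v (false, x.succ) := by
  have hsucc (y : Fin (n + 1)) : (y : ℕ) = x + 1 ↔ y = x.succ := by simp [Fin.ext_iff]
  simp [mulVec, dotProduct, collapsedU, Fintype.sum_prod_type, hsucc]

lemma collapsedU_mulVec_false_last : (collapsedU n *ᵥ v) (false, Fin.last n) = 0 := by
  have hlt (y : Fin (n + 1)) : (y : ℕ) ≠ n + 1 := y.isLt.ne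
  simp [mulVec, dotProduct, collapsedU, hlt]

lemma collapsedU_mulVec_true_zero : (collapsedU n *ᵥ v) (true, 0) = 0 := by
  simp [mulVec, dotProduct, collapsedU]

lemma collapsedU_mulVec_true_succ (x : Fin n) :
    (collapsedU n *ᵥ v) (true, x.succ)
      = (sinOmega n x : ℂ) * v (true, x.castSucc) + cosOmega n x * v (false, x.castSucc) := by
  have hcast (y : Fin (n + 1)) : (y : ℕ) = x ↔ y = x.castSucc := by simp [Fin.ext_iff]
  simp [mulVec, dotProduct, collapsedU, Fintype.sum_prod_type, hcast]

lemma dotProduct_collapsedU_mulVec (w : Bool × Fin (n + 1) → ℂ) :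
    w ⬝ᵥ collapsedU n *ᵥ v = ∑ x : Fin n,
      (w (false, x.castSucc) *
          (-(cosOmega n (x + 1) : ℂ) * v (true, x.succ) + sinOmega n (x + 1) * v (false, x.succ))
        + w (true, x.succ) *
          ((sinOmega n x : ℂ) * v (true, x.castSucc) + cosOmega n x * v (false, x.castSucc))) := by
  rw [dotProduct, Fintype.sum_prod_type, Fintype.sum_bool, Fin.sum_univ_succ, Fin.sum_univ_castSucc]
  simp only [collapsedU_mulVec_false_castSucc, collapsedU_mulVec_false_last,
    collapsedU_mulVec_true_zero, collapsedU_mulVec_true_succ, mul_zero, add_zero, zero_add,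
    sum_add_distrib]
  ring

end mulVec

lemma cosOmega_sub_cosOmega_succ {n : ℕ} (hn : n ≠ 0) (k : ℕ) :
    cosOmega n k - cosOmega n (k + 1) = 2 / n := by
  simp only [cosOmega]
  push_cast
  field_simp
  ring

noncomputable def binomAmp (n k : ℕ) : ℝ := Real.sqrt ((n - 1).choose k / 2 ^ n)

lemma binomAmp_mul_self (n k : ℕ) : binomAmp n k * binomAmp n k = (n - 1).choose k / 2 ^ n :=
  Real.mul_self_sqrt (by positivity)

lemma cast_choose_pred_succ_mul {n k : ℕ} (hk : k < n) :
    ((n - 1).choose (k + 1) : ℝ) * (k + 1) = (n - 1).choose k * (n - (k + 1)) := by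
  have h : (n - 1).choose (k + 1) * (k + 1) = (n - 1).choose k * (n - (k + 1)) := by
    rw [Nat.choose_succ_right_eq, Nat.sub_sub, Nat.add_comm 1]
  have h' := congrArg (Nat.cast : ℕ → ℝ) h
  push_cast [Nat.cast_sub (Nat.succ_le_of_lt hk)] at h'
  exact h'

lemma sinOmega_succ_mul_binomAmp {n k : ℕ} (hk : k < n) :
    sinOmega n (k + 1) * (binomAmp n k * binomAmp n (k + 1))
      = 2 * ((n - 1).choose (k + 1) * (k + 1)) / (n * 2 ^ n) := by
  have hpos : (0 : ℝ) ≤ (k + 1 : ℕ) * ((n : ℝ) - (k + 1 : ℕ)) :=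
    mul_nonneg (by positivity) (sub_nonneg.2 (by exact_mod_cast hk))
  have hsq : ((k + 1 : ℕ) * ((n : ℝ) - (k + 1 : ℕ))) *
      ((n - 1).choose k / 2 ^ n * ((n - 1).choose (k + 1) / 2 ^ n))
        = ((n - 1).choose (k + 1) * (k + 1) / 2 ^ n) ^ 2 := by
    push_cast
    linear_combination
      (-((n - 1).choose (k + 1) * (k + 1)) / (2 ^ n) ^ 2) * cast_choose_pred_succ_mul hk
  simp only [sinOmega, binomAmp]
  rw [mul_assoc, ← Real.sqrt_mul (by positivity), ← Real.sqrt_mul hpos, hsq,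
    Real.sqrt_sq (by positivity)]
  ring

lemma sinOmega_mul_binomAmp_pred {n k : ℕ} (hk : k ≤ n) :
    sinOmega n k * (binomAmp n k * binomAmp n (k - 1))
      = 2 * ((n - 1).choose k * k) / (n * 2 ^ n) := by
  rcases k with _ | j
  · simp [sinOmega]
  · rw [Nat.add_sub_cancel, mul_comm (binomAmp n _), sinOmega_succ_mul_binomAmp hk]
    push_cast
    ring

lemma collapsedU_quadratic_term_eq {n k : ℕ} (hk : k < n) :
    binomAmp n k * (-cosOmega n (k + 1) * binomAmp n k + sinOmega n (k + 1) * binomAmp n (k + 1))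
      + binomAmp n k * (sinOmega n k * binomAmp n (k - 1) + cosOmega n k * binomAmp n k)
      = (n - 1).choose k / 2 ^ (n - 1) := by
  have hn : n ≠ 0 := by omega
  calc _ = (cosOmega n k - cosOmega n (k + 1)) * (binomAmp n k * binomAmp n k)
        + sinOmega n (k + 1) * (binomAmp n k * binomAmp n (k + 1))
        + sinOmega n k * (binomAmp n k * binomAmp n (k - 1)) := by ring
    _ = 2 / n * ((n - 1).choose k / 2 ^ n) + 2 * ((n - 1).choose k * (n - (k + 1))) / (n * 2 ^ n)
        + 2 * ((n - 1).choose k * k) / (n * 2 ^ n) := by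
      rw [cosOmega_sub_cosOmega_succ hn, binomAmp_mul_self, sinOmega_succ_mul_binomAmp hk,
        sinOmega_mul_binomAmp_pred hk.le, cast_choose_pred_succ_mul hk]
    _ = _ := by
      obtain ⟨m, rfl⟩ : ∃ m, n = m + 1 := ⟨n - 1, by omega⟩
      simp only [Nat.add_sub_cancel, pow_succ]
      push_cast
      field_simp
      ring

section linePsi0
variable {n : ℕ}

lemma linePsi0_false (x : Fin (n + 1)) : linePsi0 n (false, x) = binomAmp n x := rfl

lemma linePsi0_true_succ (x : Fin n) : linePsi0 n (true, x.succ) = binomAmp n x := by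
  simp [linePsi0, binomAmp]

-- `⟨L,0|ψ₀⟩ = 0` while `binomAmp n (0 - 1) = binomAmp n 0`;
-- the factor `sin ω_0 = 0` hides the difference.
lemma sinOmega_mul_linePsi0_true_castSucc (x : Fin n) :
    (sinOmega n x : ℂ) * linePsi0 n (true, x.castSucc) = sinOmega n x * binomAmp n (x - 1) := by
  by_cases hx : (x : ℕ) = 0
  · simp [hx, sinOmega]
  · simp [linePsi0, binomAmp, hx]

lemma star_linePsi0 : star (linePsi0 n) = linePsi0 n := by
  funext p
  simp only [linePsi0, Pi.star_apply]
  split_ifs <;> simp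

lemma linePsi0_true_one (hn : 1 ≤ n) : linePsi0 n (true, 1) = binomAmp n 0 := by
  have h1 : ((1 : Fin (n + 1)) : ℕ) = 1 := by rw [Fin.val_one', Nat.mod_eq_of_lt (by omega)]
  rw [show (1 : Fin (n + 1)) = Fin.succ ⟨0, hn⟩ from Fin.ext h1, linePsi0_true_succ]

end linePsi0

lemma sum_fin_choose_pred_div_two_pow {n : ℕ} (hn : 1 ≤ n) :
    ∑ x : Fin n, ((n - 1).choose x : ℝ) / 2 ^ (n - 1) = 1 := by
  have hsum := Nat.sum_range_choose (n - 1)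
  rw [Nat.sub_add_cancel hn] at hsum
  rw [← sum_div, Fin.sum_univ_eq_sum_range (fun k => ((n - 1).choose k : ℝ)), ← Nat.cast_sum,
    hsum]
  simp

/-- `⟨ψ₀|U'|ψ₀⟩ = 1 − 1/2^{n−1}`. -/
theorem psi0_expectation (n : ℕ) (hn : 1 ≤ n) :
    star (linePsi0 n) ⬝ᵥ (collapsedU' n).mulVec (linePsi0 n)
      = 1 - 1 / 2 ^ (n - 1) := by
  have hpert : (2 : ℂ) • of (fun p q : Bool × Fin (n + 1) =>
      if p = (true, 1) ∧ q = (false, 0) then (1 : ℂ) else 0) = single (true, 1) (false, 0) 2 := by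
    ext p q
    simp [single, eq_comm]
  rw [collapsedU', sub_mulVec, dotProduct_sub, hpert, dotProduct_single_mulVec, star_linePsi0,
    dotProduct_collapsedU_mulVec]
  simp only [linePsi0_false, linePsi0_true_succ, linePsi0_true_one hn,
    sinOmega_mul_linePsi0_true_castSucc, Fin.val_succ, Fin.val_castSucc, Fin.val_zero]
  norm_cast
  rw [sum_congr rfl fun x _ => collapsedU_quadratic_term_eq x.isLt,
    sum_fin_choose_pred_div_two_pow hn, mul_right_comm, binomAmp_mul_self]
  obtain ⟨m, rfl⟩ : ∃ m, n = m + 1 := ⟨n - 1, by omega⟩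
  simp only [Nat.add_sub_cancel, Nat.choose_zero_right, pow_succ]
  push_cast
  field_simp
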